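/- arXiv:1707.03703 — 2 statements merged into one kernel-verified Lean document; each statement's English description precedes it below -/
import Mathlib

section
/- The images under the quotient map of the monomials θ^{i_2+1} θ^{i_2} θ^{i_3} ⋯ θ^{i_p} with i_2 > i_3 > ⋯ > i_p ≥ 0 and 1 + 2 i_2 + i_3 + ⋯ + i_p = d form a basis of the quotient vector space Θ^p_d / ∂(Θ^p_{d−1}). -/
/-- The generators `θ^i` of the exterior algebra over `ℝ` on countably many generators. -/
noncomputable def θg (i : ℕ) : ExteriorAlgebra ℝ (ℕ →₀ ℝ) :=
  ExteriorAlgebra.ι ℝ (Finsupp.single i 1)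

/-- The monomial `θ^{i₁} ⋯ θ^{i_p}` associated to a list of indices. -/
noncomputable def mon (l : List ℕ) : ExteriorAlgebra ℝ (ℕ →₀ ℝ) :=
  (l.map θg).prod

/-- `Θ^p_d`: the span of the standard monomials with `p` factors and total weight `d`. -/
noncomputable def ThSpace (p d : ℕ) : Submodule ℝ (ExteriorAlgebra ℝ (ℕ →₀ ℝ)) :=
  Submodule.span ℝ
    {x | ∃ l : List ℕ, l.length = p ∧ l.Pairwise (· > ·) ∧ l.sum = d ∧ x = mon l}

/-- The set of index lists `(i₂+1) :: i₂ :: i₃ :: ⋯ :: i_p` (with `i₂ > i₃ > ⋯ > i_p ≥ 0`)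
of length `p` and total weight `d`, indexing the basis of the quotient `Θ^p_d / ∂(Θ^p_{d-1})`. -/
def Bset (p d : ℕ) : Set (List ℕ) :=
  {l | ∃ (i : ℕ) (r : List ℕ), l = (i + 1) :: i :: r ∧ (i :: r).Pairwise (· > ·) ∧
    l.length = p ∧ l.sum = d}


def incr : ℕ → List ℕ → List ℕ
  | _, [] => []
  | 0, a :: t => (a + 1) :: t
  | k + 1, a :: t => a :: incr k t

lemma mon_nil : mon [] = 1 := rfl

lemma mon_cons (a : ℕ) (l : List ℕ) : mon (a :: l) = θg a * mon l := by
  simp [mon]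

lemma θg_sq (i : ℕ) : θg i * θg i = 0 := ExteriorAlgebra.ι_sq_zero _

lemma incr_length (k : ℕ) (l : List ℕ) : (incr k l).length = l.length := by
  induction l generalizing k with
  | nil => cases k <;> rfl
  | cons a t ih => cases k with
    | zero => rfl
    | succ k => simp [incr, ih]

lemma incr_sum {k : ℕ} {l : List ℕ} (h : k < l.length) : (incr k l).sum = l.sum + 1 := by
  induction l generalizing k with
  | nil => simp at h
  | cons a t ih => cases k with
    | zero => simp [incr]; ring
    | succ k =>
      simp only [incr, List.sum_cons]
      rw [ih (by simpa using h)]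
      ring

lemma incr_sorted_or_zero {k : ℕ} {l : List ℕ} (h : l.Pairwise (· > ·)) :
    (incr k l).Pairwise (· > ·) ∨ mon (incr k l) = 0 := by
  induction l generalizing k with
  | nil => left; simp [incr]
  | cons a t ih =>
    rw [List.pairwise_cons] at h
    obtain ⟨ha, ht⟩ := h
    cases k with
    | zero =>
      left
      show List.Pairwise (· > ·) ((a+1) :: t)
      rw [List.pairwise_cons]
      exact ⟨fun b hb => Nat.lt_succ_of_lt (ha b hb), ht⟩
    | succ k =>
      cases t with
      | nil => left; simpa [incr] using h
      | cons b r =>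
        rw [List.pairwise_cons] at ht
        obtain ⟨hb, hr⟩ := ht
        cases k with
        | zero =>
          rcases Nat.lt_or_ge (b + 1) a with hlt | hge
          · left
            show List.Pairwise (· > ·) (a :: (b+1) :: r)
            simp only [List.pairwise_cons]
            refine ⟨?_, fun x hx => Nat.lt_succ_of_lt (hb x hx), hr⟩
            intro x hx
            rcases List.mem_cons.1 hx with rfl | hx
            · exact hlt
            · exact Nat.lt_trans (hb x hx) (Nat.lt_trans (Nat.lt_succ_self b) hlt)
          · right
            have hab : a = b + 1 := le_antisymm hge (ha b (by simp))
            simp only [incr, mon_cons, hab, ← mul_assoc, θg_sq, zero_mul]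
        | succ k =>
          have hbr : List.Pairwise (· > ·) (b :: r) := by
            rw [List.pairwise_cons]; exact ⟨hb, hr⟩
          have h2 := @ih (k+1) hbr
          show List.Pairwise (· > ·) (a :: incr (k+1) (b :: r)) ∨
            mon (a :: incr (k+1) (b :: r)) = 0
          rcases h2 with hs | hz
          · left
            rw [List.pairwise_cons]
            refine ⟨?_, hs⟩
            intro x hx
            have hx' : x ∈ incr (k+1) (b :: r) := hx
            have : x = b ∨ x ∈ incr k r := by
              simpa [incr] using hx'
            rcases this with rfl | hx2
            · exact ha x (by simp)
            · -- x is in incr k r; from sortedness of b :: incr k r we get b > x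
              have : b > x := by
                have := hs
                rw [show incr (k+1) (b::r) = b :: incr k r from rfl, List.pairwise_cons] at this
                exact this.1 x hx2
              exact lt_trans this (ha b (by simp))
          · right
            rw [mon_cons, hz, mul_zero]

section Dlemmas

variable (D : Module.End ℝ (ExteriorAlgebra ℝ (ℕ →₀ ℝ)))
    (hder : ∀ a b, D (a * b) = D a * b + a * D b)
    (hθ : ∀ i, D (θg i) = θg (i + 1))

include hder in
lemma D_one : D 1 = 0 := by
  have := hder 1 1
  simp at this
  exact this

include hder hθ in
lemma D_mon (l : List ℕ) :
    D (mon l) = ∑ k ∈ Finset.range l.length, mon (incr k l) := by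
  induction l with
  | nil => simp [mon_nil, D_one D hder]
  | cons a t ih =>
    rw [mon_cons, hder, hθ, ih, List.length_cons, Finset.sum_range_succ', Finset.mul_sum,
      add_comm]
    congr 1

end Dlemmas

noncomputable def altf (l : List ℕ) : (ℕ →₀ ℝ) [⋀^Fin l.length]→ₗ[ℝ] ℝ :=
  Matrix.detRowAlternating.compLinearMap
    (LinearMap.pi fun i : Fin l.length => Finsupp.lapply (l.get i))

noncomputable def monφ (l : List ℕ) : ExteriorAlgebra ℝ (ℕ →₀ ℝ) →ₗ[ℝ] ℝ :=
  ExteriorAlgebra.liftAlternating fun n =>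
    if h : n = l.length then (altf l).domDomCongr (finCongr h.symm) else 0

lemma mon_eq_ιMulti (l : List ℕ) :
    mon l = ExteriorAlgebra.ιMulti ℝ l.length (fun i => Finsupp.single (l.get i) 1) := by
  rw [ExteriorAlgebra.ιMulti_apply]
  show (l.map θg).prod = _
  congr 1
  conv_lhs => rw [← List.ofFn_get l]
  rw [List.map_ofFn]
  rfl

instance : IsIrrefl ℕ (· > ·) := ⟨fun a => lt_irrefl a⟩
instance : IsAntisymm ℕ (· > ·) := ⟨fun a b h1 h2 => absurd h1 (lt_asymm h2)⟩

lemma monφ_mon {l m : List ℕ} (hl : l.Pairwise (· > ·)) (hm : m.Pairwise (· > ·)) :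
    monφ l (mon m) = if m = l then 1 else 0 := by
  have hln : l.Nodup := hl.nodup
  rw [mon_eq_ιMulti m, monφ, ExteriorAlgebra.liftAlternating_apply_ιMulti]
  by_cases h : m.length = l.length
  · rw [dif_pos h, AlternatingMap.domDomCongr_apply]
    by_cases hml : m = l
    · subst hml
      rw [if_pos rfl]
      have hM : (Matrix.of fun i j =>
          Finsupp.single (m.get (finCongr h.symm i)) 1 (m.get j)) =
          (1 : Matrix (Fin m.length) (Fin m.length) ℝ) := by
        ext i j
        simp only [Matrix.of_apply, Matrix.one_apply]
        have hi : (finCongr h.symm i) = i := by ext; rfl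
        rw [hi, Finsupp.single_apply]
        simp only [← List.get_eq_getElem, hln.get_inj_iff]
      show Matrix.det (Matrix.of fun i j =>
          Finsupp.single (m.get (finCongr h.symm i)) 1 (m.get j)) = 1
      rw [hM, Matrix.det_one]
    · rw [if_neg hml]
      have hex : ∃ j : Fin l.length, l.get j ∉ m := by
        by_contra hno
        push_neg at hno
        have hsub : l ⊆ m := by
          intro x hx
          obtain ⟨j, hj⟩ := List.mem_iff_get.mp hx
          exact hj ▸ hno j
        have hperm : l.Perm m :=
          (List.subperm_of_subset hln hsub).perm_of_length_le (le_of_eq h)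
        exact hml (List.Perm.eq_of_pairwise' hm hl hperm.symm)
      obtain ⟨j, hj⟩ := hex
      show Matrix.det (Matrix.of fun i j =>
          Finsupp.single (m.get (finCongr h.symm i)) 1 (l.get j)) = 0
      apply Matrix.det_eq_zero_of_column_eq_zero j
      intro i
      refine Finsupp.single_eq_of_ne' (fun hh => hj (hh ▸ ?_))
      exact List.get_mem m _
  · rw [dif_neg h, if_neg (fun hml => h (by rw [hml]))]
    rfl

lemma mon_rel {E : List ℕ →₀ ℝ} (hs : ∀ l ∈ E.support, l.Pairwise (· > ·))
    (h : Finsupp.linearCombination ℝ mon E = 0) : E = 0 := by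
  ext l
  simp only [Finsupp.coe_zero, Pi.zero_apply]
  by_cases hl : l ∈ E.support
  · have h2 := congrArg (monφ l) h
    rw [map_zero, Finsupp.linearCombination_apply, Finsupp.sum, map_sum] at h2
    simp_rw [map_smul] at h2
    have h3 : ∀ m ∈ E.support, E m • monφ l (mon m) = if m = l then E m else 0 := by
      intro m hm
      rw [monφ_mon (hs l hl) (hs m hm)]
      by_cases hml : m = l <;> simp [hml]
    rw [Finset.sum_congr rfl h3, Finset.sum_ite_eq' E.support l (fun m => E m),
      if_pos hl] at h2
    exact h2
  · exact Finsupp.notMem_support_iff.mp hl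

def defect : List ℕ → ℕ
  | a :: b :: _ => a - b - 1
  | _ => 0


lemma ThSpace_eq (p d : ℕ) : ThSpace p d =
    Submodule.span ℝ (mon '' {l | l.length = p ∧ l.Pairwise (· > ·) ∧ l.sum = d}) := by
  unfold ThSpace
  congr 1
  ext x
  constructor
  · rintro ⟨l, h1, h2, h3, rfl⟩; exact ⟨l, ⟨h1, h2, h3⟩, rfl⟩
  · rintro ⟨l, ⟨h1, h2, h3⟩, rfl⟩; exact ⟨l, h1, h2, h3, rfl⟩

lemma Bset_sorted {p d : ℕ} {l : List ℕ} (h : l ∈ Bset p d) : l.Pairwise (· > ·) := by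
  obtain ⟨i, r, rfl, hs, -, -⟩ := h
  rw [List.pairwise_cons]
  refine ⟨?_, hs⟩
  rw [List.pairwise_cons] at hs
  intro b hb
  rcases List.mem_cons.1 hb with rfl | hb
  · exact Nat.lt_succ_self b
  · exact Nat.lt_succ_of_lt (hs.1 b hb)

section Span

variable (D : Module.End ℝ (ExteriorAlgebra ℝ (ℕ →₀ ℝ)))
    (hder : ∀ a b, D (a * b) = D a * b + a * D b)
    (hθ : ∀ i, D (θg i) = θg (i + 1))

include hder hθ in
lemma key_span (p d : ℕ) (hd : 1 ≤ d) : ∀ n (l : List ℕ), l.length = p →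
    l.Pairwise (· > ·) → l.sum = d → defect l < n →
    mon l ∈ Submodule.span ℝ (mon '' Bset p d) ⊔ (ThSpace p (d-1)).map D := by
  intro n
  induction n with
  | zero => intro l _ _ _ hh; omega
  | succ n ih =>
    intro l hlen hsort hsum hdef
    cases l with
    | nil => simp at hsum; omega
    | cons a t =>
      cases t with
      | nil =>
        -- l = [a], a = d, p = 1
        simp only [List.sum_cons, List.sum_nil, add_zero] at hsum
        subst hsum
        apply Submodule.mem_sup_right
        refine Submodule.mem_map.mpr ⟨mon [a-1], ?_, ?_⟩
        · apply Submodule.subset_span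
          exact ⟨[a-1], by simpa using hlen, List.pairwise_singleton _ _, by simp, rfl⟩
        · rw [D_mon D hder hθ [a-1]]
          simp only [List.length_cons, List.length_nil, zero_add, Finset.sum_range_one]
          show mon [a - 1 + 1] = mon [a]
          congr 2
          omega
      | cons b r =>
        rw [List.pairwise_cons] at hsort
        obtain ⟨hagt, hsort2⟩ := hsort
        have hab' : a > b := hagt b (by simp)
        by_cases hab : a = b + 1
        · apply Submodule.mem_sup_left
          apply Submodule.subset_span
          refine ⟨a :: b :: r, ⟨b, r, by rw [hab], hsort2, hlen, hsum⟩, rfl⟩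
        · have hgt : b + 1 < a := by omega
          have hsort' : ((a-1) :: b :: r).Pairwise (· > ·) := by
            rw [List.pairwise_cons]
            refine ⟨?_, hsort2⟩
            intro x hx
            have := hsort2
            rw [List.pairwise_cons] at this
            rcases List.mem_cons.1 hx with rfl | hx
            · omega
            · have : b > x := this.1 x hx
              omega
          have hsum' : ((a-1) :: b :: r).sum = d - 1 := by
            simp only [List.sum_cons] at hsum ⊢
            omega
          have hlen' : ((a-1) :: b :: r).length = p := by simpa using hlen
          have hmem : mon ((a-1) :: b :: r) ∈ ThSpace p (d-1) :=
            Submodule.subset_span ⟨(a-1) :: b :: r, hlen', hsort', hsum', rfl⟩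
          have hD := D_mon D hder hθ ((a-1) :: b :: r)
          have hlen2 : ((a-1) :: b :: r).length = r.length + 2 := by simp
          rw [hlen2, Finset.sum_range_succ'] at hD
          have h0 : incr 0 ((a-1) :: b :: r) = a :: b :: r := by
            show ((a-1)+1) :: b :: r = a :: b :: r
            congr 1
            omega
          rw [h0] at hD
          have heq : mon (a :: b :: r) = D (mon ((a-1) :: b :: r)) -
              ∑ k ∈ Finset.range (r.length + 1), mon (incr (k+1) ((a-1) :: b :: r)) := by
            rw [hD, add_sub_cancel_left]
          rw [heq]
          apply Submodule.sub_mem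
          · exact Submodule.mem_sup_right (Submodule.mem_map.mpr ⟨_, hmem, rfl⟩)
          · apply Submodule.sum_mem
            intro k hk
            rcases incr_sorted_or_zero (k := k+1) hsort' with hs | hz
            · apply ih
              · rw [incr_length]; exact hlen'
              · exact hs
              · rw [incr_sum (by have := Finset.mem_range.1 hk; simp; omega :
                    k+1 < ((a-1) :: b :: r).length), hsum']
                omega
              · have hdl : defect (a :: b :: r) = a - b - 1 := rfl
                cases k with
                | zero =>
                  have : defect (incr 1 ((a-1) :: b :: r)) = (a-1) - (b+1) - 1 := rfl
                  rw [this]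
                  rw [hdl] at hdef
                  omega
                | succ k' =>
                  have : defect (incr (k'+2) ((a-1) :: b :: r)) = (a-1) - b - 1 := rfl
                  rw [this]
                  rw [hdl] at hdef
                  omega
            · rw [hz]
              exact Submodule.zero_mem _

end Span

/-- the classes of the monomials `θ^{i₂+1} θ^{i₂} θ^{i₃} ⋯ θ^{i_p}` with
`i₂ > i₃ > ⋯ > i_p ≥ 0` and total weight `d` form a basis of `Θ^p_d / ∂(Θ^p_{d-1})`:
they span modulo the image of `∂` and are linearly independent modulo it. -/
theorem stmt2 (D : Module.End ℝ (ExteriorAlgebra ℝ (ℕ →₀ ℝ)))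
    (hder : ∀ a b, D (a * b) = D a * b + a * D b)
    (hθ : ∀ i, D (θg i) = θg (i + 1))
    (p d : ℕ) (hd : 1 ≤ d) :
    (∀ a ∈ ThSpace p d, ∃ c : List ℕ →₀ ℝ, ↑c.support ⊆ Bset p d ∧
      ∃ b ∈ ThSpace p (d - 1), a = (c.sum fun l r => r • mon l) + D b) ∧
    (∀ c : List ℕ →₀ ℝ, ↑c.support ⊆ Bset p d →
      (∃ b ∈ ThSpace p (d - 1), (c.sum fun l r => r • mon l) = D b) → c = 0) := by
  constructor
  · -- spanning
    intro a ha
    have hS : ThSpace p d ≤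
        Submodule.span ℝ (mon '' Bset p d) ⊔ (ThSpace p (d-1)).map D := by
      rw [ThSpace_eq]
      apply Submodule.span_le.mpr
      rintro x ⟨l, ⟨h1, h2, h3⟩, rfl⟩
      exact key_span D hder hθ p d hd (defect l + 1) l h1 h2 h3 (Nat.lt_succ_self _)
    have hmem := hS ha
    rw [Submodule.mem_sup] at hmem
    obtain ⟨s, hsmem, t, htmem, rfl⟩ := hmem
    rw [Finsupp.mem_span_image_iff_linearCombination] at hsmem
    obtain ⟨c, hc, rfl⟩ := hsmem
    obtain ⟨b, hb, rfl⟩ := Submodule.mem_map.mp htmem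
    refine ⟨c, (Finsupp.mem_supported ℝ c).1 hc, b, hb, ?_⟩
    rw [Finsupp.linearCombination_apply]
  · -- independence
    rintro c hc ⟨b, hb, heq⟩
    by_cases hp : 2 ≤ p
    swap
    · -- Bset is empty
      have hemp : c.support = ∅ := by
        by_contra hne
        obtain ⟨l, hl⟩ := Finset.nonempty_of_ne_empty hne
        obtain ⟨i, r, rfl, -, hlen, -⟩ := hc hl
        simp at hlen
        omega
      exact Finsupp.support_eq_empty.mp hemp
    rw [ThSpace_eq, Finsupp.mem_span_image_iff_linearCombination] at hb
    obtain ⟨cb, hcb, hbeq⟩ := hb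
    have hcbs := (Finsupp.mem_supported ℝ cb).1 hcb
    classical
    set Dfin : List ℕ → (List ℕ →₀ ℝ) := fun m =>
      ∑ k ∈ (Finset.range m.length).filter (fun k => (incr k m).Pairwise (· > ·)),
        Finsupp.single (incr k m) (1:ℝ) with hDfin
    have claim0 : ∀ m : List ℕ, m.Pairwise (· > ·) →
        Finsupp.linearCombination ℝ mon (Dfin m) = D (mon m) := by
      intro m hm
      rw [hDfin]
      simp only
      rw [map_sum]
      simp_rw [Finsupp.linearCombination_single, one_smul]
      rw [D_mon D hder hθ m]
      apply Finset.sum_filter_of_ne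
      intro k _ hk
      rcases incr_sorted_or_zero (k := k) hm with h | h
      · exact h
      · exact absurd h hk
    set E : List ℕ →₀ ℝ := c - ∑ m ∈ cb.support, cb m • Dfin m with hE
    have claim1 : Finsupp.linearCombination ℝ mon E = 0 := by
      rw [hE, map_sub, map_sum]
      have : ∀ m ∈ cb.support, Finsupp.linearCombination ℝ mon (cb m • Dfin m) =
          cb m • D (mon m) := by
        intro m hm
        rw [map_smul, claim0 m (hcbs hm).2.1]
      rw [Finset.sum_congr rfl this]
      have hDb : ∑ m ∈ cb.support, cb m • D (mon m) = D b := by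
        rw [← hbeq, Finsupp.linearCombination_apply, Finsupp.sum, map_sum]
        exact Finset.sum_congr rfl fun m _ => (map_smul D _ _).symm
      rw [hDb]
      rw [Finsupp.linearCombination_apply, heq, sub_self]
    have claim2 : ∀ l ∈ E.support, l.Pairwise (· > ·) := by
      intro l hl
      have := Finsupp.support_sub (f := c) (g := ∑ m ∈ cb.support, cb m • Dfin m) hl
      rcases Finset.mem_union.1 this with h | h
      · exact Bset_sorted (hc h)
      · have h2 := Finsupp.support_finset_sum h
        obtain ⟨m, hm, hml⟩ := Finset.mem_biUnion.1 h2
        have h3 := Finsupp.support_smul hml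
        have h4 := Finsupp.support_finset_sum h3
        obtain ⟨k, hk, hkl⟩ := Finset.mem_biUnion.1 h4
        have h5 := Finsupp.support_single_subset hkl
        rw [Finset.mem_singleton] at h5
        subst h5
        exact (Finset.mem_filter.1 hk).2
    have hE0 : E = 0 := mon_rel claim2 claim1
    have hceq : c = ∑ m ∈ cb.support, cb m • Dfin m := by
      have := sub_eq_zero.mp (hE ▸ hE0 : c - _ = 0)
      exact this
    by_cases hcb0 : cb.support = ∅
    · rw [hceq, hcb0, Finset.sum_empty]
    · obtain ⟨m, hm, hmax⟩ := Finset.exists_max_image cb.support (fun m => m.headI)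
        (Finset.nonempty_of_ne_empty hcb0)
      obtain ⟨hmlen, hmsort, hmsum⟩ := hcbs hm
      obtain ⟨m₁, m₂, mr, rfl⟩ : ∃ m₁ m₂ mr, m = m₁ :: m₂ :: mr := by
        cases m with
        | nil => simp at hmlen; omega
        | cons x t =>
          cases t with
          | nil => simp at hmlen; omega
          | cons y r => exact ⟨x, y, r, rfl⟩
      set t : List ℕ := (m₁+1) :: m₂ :: mr with ht
      have hm1 : ∀ x ∈ m₂ :: mr, m₁ > x := (List.pairwise_cons.1 hmsort).1
      have hm12 : m₁ > m₂ := hm1 m₂ (by simp)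
      have htsort : t.Pairwise (· > ·) := by
        rw [ht, List.pairwise_cons]
        exact ⟨fun x hx => Nat.lt_succ_of_lt (hm1 x hx), (List.pairwise_cons.1 hmsort).2⟩
      have htB : t ∉ Bset p d := by
        rintro ⟨i, r, heqq, -, -, -⟩
        rw [ht] at heqq
        injection heqq with h1 h2
        injection h2 with h3 h4
        omega
      have hct : c t = 0 := by
        by_contra hne
        exact htB (hc (Finsupp.mem_support_iff.2 hne))
      have hval : ∀ m' ∈ cb.support, (Dfin m') t = if m' = m₁ :: m₂ :: mr then 1 else 0 := by
        intro m' hm'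
        obtain ⟨hlen', hsort', -⟩ := hcbs hm'
        rw [hDfin]
        simp only
        rw [Finsupp.finset_sum_apply]
        by_cases hmm : m' = m₁ :: m₂ :: mr
        · subst hmm
          rw [if_pos rfl]
          rw [Finset.sum_eq_single_of_mem 0 ?_ ?_]
          · exact Finsupp.single_eq_same
          · rw [Finset.mem_filter, Finset.mem_range]
            exact ⟨by simp, htsort⟩
          · intro k hk hk0
            apply Finsupp.single_eq_of_ne'
            cases k with
            | zero => exact absurd rfl hk0
            | succ k' =>
              intro heqq
              rw [show incr (k'+1) (m₁ :: m₂ :: mr) = m₁ :: incr k' (m₂ :: mr) from rfl,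
                ht] at heqq
              injection heqq with h1 h2
              omega
        · rw [if_neg hmm]
          apply Finset.sum_eq_zero
          intro k hk
          apply Finsupp.single_eq_of_ne'
          cases m' with
          | nil => simp at hlen'; omega
          | cons x s' =>
            have hxle : x ≤ m₁ := hmax (x :: s') hm'
            cases k with
            | zero =>
              intro heqq
              rw [show incr 0 (x :: s') = (x+1) :: s' from rfl, ht] at heqq
              injection heqq with h1 h2
              exact hmm (by rw [h2]; congr 1; omega)
            | succ k' =>
              intro heqq
              rw [show incr (k'+1) (x :: s') = x :: incr k' s' from rfl, ht] at heqq
              injection heqq with h1 h2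
              omega
      have hfinal : c t = cb (m₁ :: m₂ :: mr) := by
        conv_lhs => rw [hceq]
        rw [Finsupp.finset_sum_apply]
        have : ∀ m' ∈ cb.support, (cb m' • Dfin m') t =
            if m' = m₁ :: m₂ :: mr then cb m' else 0 := by
          intro m' hm'
          rw [Finsupp.smul_apply, hval m' hm', smul_eq_mul]
          by_cases hmm : m' = m₁ :: m₂ :: mr <;> simp [hmm]
        rw [Finset.sum_congr rfl this, Finset.sum_ite_eq' cb.support _ (fun m' => cb m'),
          if_pos hm]
      rw [hct] at hfinal
      exact absurd hfinal.symm (Finsupp.mem_support_iff.1 hm)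
end

section
/- For every k ≥ 0, the element θ^0 θ^{2k+1} of Θ^2_{2k+1} does not belong to the image ∂(Θ^2_{2k}) of the derivation ∂. -/
noncomputable section

abbrev Fsp := ℕ →₀ ℝ

def fcoef (a b : ℕ) : ℝ := if b < a then (-1)^b else 0

def Bmap : Fsp →ₗ[ℝ] Fsp →ₗ[ℝ] ℝ :=
  Finsupp.lsum ℝ fun a => (LinearMap.id : ℝ →ₗ[ℝ] ℝ).smulRight
    (Finsupp.lsum ℝ fun b => (LinearMap.id : ℝ →ₗ[ℝ] ℝ).smulRight (fcoef a b))

lemma Bmap_single (a b : ℕ) : Bmap (Finsupp.single a 1) (Finsupp.single b 1) = fcoef a b := by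
  simp [Bmap]

def M2 : MultilinearMap ℝ (fun _ : Fin 2 => Fsp) ℝ where
  toFun v := Bmap (v 0) (v 1)
  map_update_add' v i x y := by
    fin_cases i <;> simp [Function.update_apply]
  map_update_smul' v i c x := by
    fin_cases i <;> simp [Function.update_apply]

def A2 : Fsp [⋀^Fin 2]→ₗ[ℝ] ℝ := MultilinearMap.alternatization M2

lemma A2_apply (v w : Fsp) : A2 ![v, w] = Bmap v w - Bmap w v := by
  have huniv : (Finset.univ : Finset (Equiv.Perm (Fin 2))) = {1, Equiv.swap 0 1} := by decide
  rw [A2, MultilinearMap.alternatization_apply, huniv, Finset.sum_pair (by decide)]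
  simp [M2, Equiv.Perm.sign_swap, Matrix.cons_val_zero, Matrix.cons_val_one, sub_eq_add_neg]

def phi : ExteriorAlgebra ℝ Fsp →ₗ[ℝ] ℝ :=
  ExteriorAlgebra.liftAlternating (Function.update (fun i => (0 : Fsp [⋀^Fin i]→ₗ[ℝ] ℝ)) 2 A2)

lemma phi_mul (v w : Fsp) : phi (ExteriorAlgebra.ι ℝ v * ExteriorAlgebra.ι ℝ w)
    = Bmap v w - Bmap w v := by
  rw [phi, ExteriorAlgebra.liftAlternating_ι_mul, ExteriorAlgebra.liftAlternating_ι]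
  simp [Function.update_self, A2_apply]

lemma phi_theta (a b : ℕ) : phi (θg a * θg b) = fcoef a b - fcoef b a := by
  rw [θg, θg, phi_mul, Bmap_single, Bmap_single]

/-- for every `k ≥ 0`, the element `θ^0 θ^{2k+1} ∈ Θ^2_{2k+1}` does not lie in
the image `∂(Θ^2_{2k})` of the derivation `∂`. -/
theorem stmt9 (D : Module.End ℝ (ExteriorAlgebra ℝ (ℕ →₀ ℝ)))
    (hder : ∀ a b, D (a * b) = D a * b + a * D b)
    (hθ : ∀ i, D (θg i) = θg (i + 1))
    (k : ℕ) :
    θg 0 * θg (2 * k + 1) ∉ Submodule.map D (ThSpace 2 (2 * k)) := by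
  rintro ⟨x, hx, hEq⟩
  have hker : ThSpace 2 (2 * k) ≤ LinearMap.ker (phi ∘ₗ (D : ExteriorAlgebra ℝ (ℕ →₀ ℝ) →ₗ[ℝ] _)) := by
    rw [ThSpace, Submodule.span_le]
    rintro _ ⟨l, hlen, hsort, hsum, rfl⟩
    obtain ⟨a, b, rfl⟩ := List.length_eq_two.mp hlen
    have hab : a > b := by
      simpa using (List.pairwise_cons.mp hsort).1 b (by simp)
    have hsum' : a + b = 2 * k := by simpa using hsum
    have hmon : mon [a, b] = θg a * θg b := by simp [mon]
    simp only [SetLike.mem_coe, LinearMap.mem_ker, LinearMap.comp_apply, hmon]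
    rw [hder, hθ, hθ, map_add, phi_theta, phi_theta]
    have h1 : b < a + 1 := by omega
    have h2 : ¬ (a + 1 < b) := by omega
    have h3 : b + 1 < a := by omega
    have h4 : ¬ (a < b + 1) := by omega
    simp [fcoef, h1, h2, h3, h4, if_neg, pow_succ]
  have h0 : phi (D x) = 0 := hker hx
  rw [hEq, phi_theta] at h0
  have h5 : ¬ ((2*k+1 : ℕ) < 0) := by omega
  have h6 : (0:ℕ) < 2*k+1 := by omega
  simp [fcoef, h5, h6] at h0
end
end
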